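/- The Kress quadrature weights q_j = −(π/m)Σ_{k=1}^{m−1}(1/k)cos(kjπ/m) − (−1)^j π/(2m²), j = 0,…,2m−1, satisfy the exactness property Σ_{j=0}^{2m−1} q_j cos(n α_j) = ∫₀^{2π} cos(nα) ln(2|sin(α/2)|) dα = −π/n for every integer 1 ≤ n ≤ m−1, where α_j = jπ/m. -/

import Mathlib

/-!
On the grid `α_j = jπ/m` the cosines are orthogonal: `∑_j cos (k α_j) cos (n α_j) = m δ_kn`
whenever `0 < k + n < 2m`, by summing geometric series of `2m`-th roots of unity. Since
`(-1)^j = cos (m α_j)`, only the term `k = n` of `q_j` survives, giving `-π/n`.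

The integral is computed by integrating by parts against `sin (n α) / n`. The kernel
`log (2 sin (α/2))` has derivative `cot (α/2) / 2`, and the Dirichlet kernel identity turns
`sin (n α) cot (α/2)` into the trigonometric polynomial `1 + 2 ∑_{k=1}^{n-1} cos (k α) + cos (n α)`,
of integral `2π`. The boundary term vanishes because `|sin (n α)| ≤ n |2 sin (α/2)|` and
`y log y → 0`.
-/

open Real Filter Topology Finset

lemma sum_range_cos_eq_zero {N : ℕ} {p : ℤ} (hp : ¬ (N : ℤ) ∣ p) :
    ∑ j ∈ range N, cos (2 * π * p * j / N) = 0 := by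
  rcases eq_or_ne N 0 with rfl | hN
  · simp
  set ζ := Complex.exp (2 * π * Complex.I / N)
  have hζ : IsPrimitiveRoot ζ N := Complex.isPrimitiveRoot_exp N hN
  have hz : ζ ^ p ≠ 1 := by rwa [Ne, hζ.zpow_eq_one_iff_dvd]
  have hzN : (ζ ^ p) ^ N = 1 := by
    rw [← zpow_natCast, ← zpow_mul, mul_comm, zpow_mul, zpow_natCast, hζ.pow_eq_one, one_zpow]
  have hre : ∀ j : ℕ, ((ζ ^ p) ^ j).re = cos (2 * π * p * j / N) := by
    intro j
    rw [← zpow_natCast, ← zpow_mul, ← Complex.exp_int_mul, ← Complex.exp_ofReal_mul_I_re]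
    congr 2
    push_cast
    ring
  calc ∑ j ∈ range N, cos (2 * π * p * j / N) = (∑ j ∈ range N, (ζ ^ p) ^ j).re := by
        simp [Complex.re_sum, hre]
    _ = 0 := by rw [geom_sum_eq hz, hzN]; simp

lemma sum_range_cos_mul_cos {m k n : ℕ} (hkn : 0 < k + n) (hknm : k + n < 2 * m) :
    ∑ j ∈ range (2 * m), cos (k * j * π / m) * cos (n * j * π / m) =
      if k = n then (m : ℝ) else 0 := by
  have hm : (m : ℝ) ≠ 0 := by norm_cast; omega
  have not_dvd : ∀ p : ℤ, p ≠ 0 → |p| < 2 * m → ¬ ((2 * m : ℕ) : ℤ) ∣ p := fun p hp hlt hdvd =>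
    hp (Int.eq_zero_of_abs_lt_dvd hdvd (by push_cast; exact hlt))
  have hsplit : ∀ j : ℕ, cos (k * j * π / m) * cos (n * j * π / m) =
      (cos (2 * π * ((k - n : ℤ) : ℝ) * j / (2 * m : ℕ)) +
        cos (2 * π * ((k + n : ℤ) : ℝ) * j / (2 * m : ℕ))) / 2 := by
    intro j
    rw [eq_div_iff two_ne_zero, mul_comm _ (2 : ℝ), ← mul_assoc, two_mul_cos_mul_cos]
    congr 2 <;> push_cast <;> field_simp
  have hsum_add : ∑ j ∈ range (2 * m), cos (2 * π * ((k + n : ℤ) : ℝ) * j / (2 * m : ℕ)) = 0 :=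
    sum_range_cos_eq_zero (not_dvd _ (by omega) (by rw [abs_lt]; omega))
  rw [sum_congr rfl fun j _ => hsplit j, ← sum_div, sum_add_distrib, hsum_add, add_zero]
  split_ifs with h
  · subst h
    simp
  · rw [sum_range_cos_eq_zero (not_dvd _ (by omega) (by rw [abs_lt]; omega)), zero_div]

noncomputable def kressWeight (m j : ℕ) : ℝ :=
  -(π / m) * ∑ k ∈ Icc 1 (m - 1), (1 / (k : ℝ)) * cos (k * j * π / m)
    - (-1 : ℝ) ^ j * π / (2 * (m : ℝ) ^ 2)

lemma sum_kressWeight_mul_cos {m n : ℕ} (hn : 0 < n) (hnm : n < m) :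
    ∑ j ∈ range (2 * m), kressWeight m j * cos (n * (j * π / m)) = -π / n := by
  have hm : (m : ℝ) ≠ 0 := by norm_cast; omega
  have hsign : ∀ j : ℕ, (-1 : ℝ) ^ j = cos (m * j * π / m) := fun j => by
    rw [mul_assoc, mul_div_cancel_left₀ _ hm, cos_nat_mul_pi]
  calc ∑ j ∈ range (2 * m), kressWeight m j * cos (n * (j * π / m))
      = -(π / m) * ∑ k ∈ Icc 1 (m - 1), (1 / (k : ℝ)) *
            ∑ j ∈ range (2 * m), cos (k * j * π / m) * cos (n * j * π / m)
        - π / (2 * m ^ 2) * ∑ j ∈ range (2 * m), cos (m * j * π / m) * cos (n * j * π / m) := by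
        have harg : ∀ j : ℕ, (n : ℝ) * (j * π / m) = n * j * π / m := fun j => by ring
        simp only [kressWeight, hsign, harg, sub_mul, sum_sub_distrib, mul_sum, sum_mul]
        rw [sum_comm]
        congr 1 <;> refine sum_congr rfl fun _ _ => ?_
        · refine sum_congr rfl fun _ _ => ?_
          ring
        · ring
    _ = -(π / m) * ∑ k ∈ Icc 1 (m - 1), (1 / (k : ℝ)) * (if k = n then (m : ℝ) else 0)
        - π / (2 * m ^ 2) * 0 := by
        rw [sum_range_cos_mul_cos (by omega) (by omega), if_neg (by omega)]
        congr 2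
        refine sum_congr rfl fun k hk => ?_
        rw [sum_range_cos_mul_cos (by rw [mem_Icc] at hk; omega) (by rw [mem_Icc] at hk; omega)]
    _ = -π / n := by
        simp only [mul_ite, mul_zero, sub_zero, sum_ite_eq', mem_Icc, if_pos (show 1 ≤ n ∧ n ≤ m - 1 by omega)]
        field_simp

lemma abs_sin_nat_mul_le (k : ℕ) (x : ℝ) : |sin (k * x)| ≤ k * |sin x| := by
  induction k with
  | zero => simp
  | succ k ih =>
    calc |sin ((k + 1 : ℕ) * x)| = |sin (k * x) * cos x + cos (k * x) * sin x| := by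
          push_cast; rw [add_mul, one_mul, sin_add]
      _ ≤ |sin (k * x)| * |cos x| + |cos (k * x)| * |sin x| := by
          rw [← abs_mul, ← abs_mul]; exact abs_add_le _ _
      _ ≤ k * |sin x| * 1 + 1 * |sin x| := by
          gcongr
          exacts [abs_cos_le_one x, abs_cos_le_one _]
      _ = (k + 1 : ℕ) * |sin x| := by push_cast; ring

theorem Continuous.mul_log_of_abs_le {f g : ℝ → ℝ} (hf : Continuous f) (hg : Continuous g)
    {C : ℝ} (hfg : ∀ x, |f x| ≤ C * |g x|) : Continuous fun x => f x * Real.log (g x) := by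
  refine continuous_iff_continuousAt.2 fun x => ?_
  by_cases hx : g x = 0
  · have hfx : f x = 0 := abs_nonpos_iff.1 (by simpa [hx] using hfg x)
    have hlim : Tendsto (fun y => C * |g y * Real.log (g y)|) (𝓝 x) (𝓝 0) := by
      simpa [hx] using ((continuous_mul_log.comp hg).tendsto x).abs.const_mul C
    show Tendsto _ (𝓝 x) (𝓝 (f x * Real.log (g x)))
    rw [hfx, zero_mul]
    refine squeeze_zero_norm (fun y => ?_) hlim
    rw [norm_mul, Real.norm_eq_abs, Real.norm_eq_abs, abs_mul (g y), ← mul_assoc]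
    exact mul_le_mul_of_nonneg_right (hfg y) (abs_nonneg _)
  · exact hf.continuousAt.mul (hg.continuousAt.log hx)

lemma two_mul_sin_half_mul_sum_cos (n : ℕ) (α : ℝ) :
    2 * sin (α / 2) * ∑ k ∈ Icc 1 n, cos (k * α) = sin ((n + 1 / 2) * α) - sin (α / 2) := by
  induction n with
  | zero => simp [div_eq_inv_mul]
  | succ n ih =>
    rw [sum_Icc_succ_top (by omega), mul_add, ih, two_mul_sin_mul_cos]
    push_cast
    rw [show α / 2 - (n + 1) * α = -((n + 1 / 2) * α) by ring, sin_neg]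
    ring_nf

/-- Integration by parts against `sin (n α) / n`: the correction term is a primitive of
`sin (n α) cot (α / 2) / 2 = 1 / 2 + ∑_{k=1}^n cos (k α) - cos (n α) / 2`. -/
noncomputable def logKernelCosPrimitive (n : ℕ) (α : ℝ) : ℝ :=
  (sin (n * α) * log (2 * sin (α / 2))
    - (α / 2 + ∑ k ∈ Icc 1 n, sin (k * α) / k - sin (n * α) / (2 * n))) / n

lemma continuous_logKernelCosPrimitive (n : ℕ) : Continuous (logKernelCosPrimitive n) := by
  have hbound : ∀ α : ℝ, |sin (n * α)| ≤ n * |2 * sin (α / 2)| := fun α =>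
    calc |sin (n * α)| = |sin ((2 * n : ℕ) * (α / 2))| := by push_cast; ring_nf
      _ ≤ (2 * n : ℕ) * |sin (α / 2)| := abs_sin_nat_mul_le _ _
      _ = n * |2 * sin (α / 2)| := by rw [abs_mul, abs_two]; push_cast; ring
  unfold logKernelCosPrimitive
  exact (((by fun_prop : Continuous fun α : ℝ => sin (n * α)).mul_log_of_abs_le
    (by fun_prop) hbound).sub (by fun_prop)).div_const _

lemma hasDerivAt_logKernelCosPrimitive {n : ℕ} (hn : n ≠ 0) {α : ℝ} (hα : sin (α / 2) ≠ 0) :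
    HasDerivAt (logKernelCosPrimitive n) (cos (n * α) * log (2 * sin (α / 2))) α := by
  have hn' : (n : ℝ) ≠ 0 := by exact_mod_cast hn
  have hlin : ∀ c : ℝ, HasDerivAt (fun α : ℝ => sin (c * α)) (cos (c * α) * c) α := fun c => by
    simpa using ((hasDerivAt_id' α).const_mul c).sin
  have hlog : HasDerivAt (fun α => log (2 * sin (α / 2))) (cos (α / 2) / (2 * sin (α / 2))) α := by
    have := (((hasDerivAt_id' α).div_const 2).sin.const_mul 2).log (by simpa using hα)
    convert this using 1
    ring
  have hsum : HasDerivAt (fun α => ∑ k ∈ Icc 1 n, sin (k * α) / k)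
      (∑ k ∈ Icc 1 n, cos (k * α)) α := by
    refine HasDerivAt.fun_sum fun k hk => ?_
    have hk : (k : ℝ) ≠ 0 := by rw [mem_Icc] at hk; exact_mod_cast (by omega : k ≠ 0)
    exact ((hlin k).div_const (k : ℝ)).congr_deriv (mul_div_cancel_right₀ _ hk)
  have := ((((hlin n).mul hlog).sub ((((hasDerivAt_id' α).div_const 2).add hsum).sub
    ((hlin n).div_const (2 * n)))).div_const (n : ℝ))
  refine this.congr_deriv ?_
  have hD := two_mul_sin_half_mul_sum_cos n α
  set S := ∑ k ∈ Icc 1 n, cos (k * α)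
  rw [show ((n : ℝ) + 1 / 2) * α = n * α + α / 2 by ring, sin_add] at hD
  field_simp
  linear_combination -hD

theorem integral_cos_mul_log_two_mul_abs_sin_half {n : ℕ} (hn : n ≠ 0) :
    ∫ α in (0 : ℝ)..(2 * π), cos (n * α) * log (2 * |sin (α / 2)|) = -π / n := by
  have habs : ∀ α : ℝ, log (2 * |sin (α / 2)|) = log (2 * sin (α / 2)) := fun α => by
    rw [← abs_two, ← abs_mul, log_abs, abs_two]
  have hint : IntervalIntegrable (fun α => cos (n * α) * log (2 * sin (α / 2)))
      MeasureTheory.volume 0 (2 * π) := by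
    refine IntervalIntegrable.continuousOn_mul ?_ (by fun_prop)
    exact MeromorphicOn.intervalIntegrable_log (AnalyticOnNhd.meromorphicOn fun x _ => by fun_prop)
  simp_rw [habs]
  rw [intervalIntegral.integral_eq_sub_of_hasDerivAt_of_le (by positivity)
    (continuous_logKernelCosPrimitive n).continuousOn (fun α hα => ?_) hint]
  · have hsin : ∀ k : ℕ, sin (k * (2 * π)) = 0 := fun k => by
      simpa using sin_add_nat_mul_two_pi 0 k
    simp [logKernelCosPrimitive, hsin]
  · refine hasDerivAt_logKernelCosPrimitive hn (sin_pos_of_pos_of_lt_pi ?_ ?_).ne'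
    · linarith [hα.1]
    · linarith [hα.2]

theorem kress_quadrature_exactness_general
    (m : ℕ) (q : ℕ → ℝ)
    (hq : ∀ j : ℕ, q j =
      -(π / m) * ∑ k ∈ Finset.Icc 1 (m - 1), (1 / (k : ℝ)) * Real.cos (k * j * π / m)
        - (-1 : ℝ) ^ j * π / (2 * (m : ℝ) ^ 2)) :
    ∀ n : ℕ, 1 ≤ n → n ≤ m - 1 →
      (∑ j ∈ Finset.range (2 * m), q j * Real.cos (n * ((j : ℝ) * π / m)))
        = ∫ α in (0 : ℝ)..(2 * π), Real.cos (n * α) * Real.log (2 * |Real.sin (α / 2)|) ∧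
      (∫ α in (0 : ℝ)..(2 * π), Real.cos (n * α) * Real.log (2 * |Real.sin (α / 2)|))
        = -π / n := by
  intro n hn1 hn2
  obtain rfl : q = kressWeight m := funext hq
  rw [integral_cos_mul_log_two_mul_abs_sin_half (by omega),
    sum_kressWeight_mul_cos (by omega) (by omega)]
  exact ⟨rfl, rfl⟩

/-- Exactness of the Kress quadrature: the weights q_j integrate cos(nα) against the
logarithmic kernel exactly for 1 ≤ n ≤ m−1, the common value being −π/n. -/
theorem kress_quadrature_exactness
    (m : ℕ) (hm : 2 ≤ m) (q : ℕ → ℝ)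
    (hq : ∀ j : ℕ, q j =
      -(π / m) * ∑ k ∈ Finset.Icc 1 (m - 1), (1 / (k : ℝ)) * Real.cos (k * j * π / m)
        - (-1 : ℝ) ^ j * π / (2 * (m : ℝ) ^ 2)) :
    ∀ n : ℕ, 1 ≤ n → n ≤ m - 1 →
      (∑ j ∈ Finset.range (2 * m), q j * Real.cos (n * ((j : ℝ) * π / m)))
        = ∫ α in (0 : ℝ)..(2 * π), Real.cos (n * α) * Real.log (2 * |Real.sin (α / 2)|) ∧
      (∫ α in (0 : ℝ)..(2 * π), Real.cos (n * α) * Real.log (2 * |Real.sin (α / 2)|))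
        = -π / n :=
  kress_quadrature_exactness_general m q hq
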